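/- arXiv:2403.05526 — 3 statements merged into one kernel-verified Lean document; each statement's English description precedes it below -/
import Mathlib

section
/- Let k ∈ [0,1], m ≥ 1, δ > 0, and suppose that for all ε > 0 and all β > 1 one has (2/m)·ln((1 + k β^m ε^m)/(1 + k)) − ln(βε) ≤ ln(4δ/ε) + C·ε for some constant C ≥ 0. Then δ ≥ 1/(4(1+k)^(2/m)). -/
theorem stmt_3 (k m δ : ℝ) (hk0 : 0 ≤ k) (hk1 : k ≤ 1) (hm : 1 ≤ m) (hδ : 0 < δ)
    (h : ∃ C : ℝ, 0 ≤ C ∧ ∀ ε > (0:ℝ), ∀ β > (1:ℝ),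
      (2 / m) * Real.log ((1 + k * β ^ m * ε ^ m) / (1 + k)) - Real.log (β * ε)
        ≤ Real.log (4 * δ / ε) + C * ε) :
    δ ≥ 1 / (4 * (1 + k) ^ (2 / m)) := by
  obtain ⟨C, hC, h⟩ := h
  have hk : (0:ℝ) < 1 + k := by linarith
  have hm0 : (0:ℝ) < m := by linarith
  have key : Real.log (1 / (1 + k)) * (2 / m) ≤ Real.log (4 * δ) := by
    apply le_of_forall_pos_le_add
    intro t ht
    set β := Real.exp (t / 2) with hβdef
    have hβ : 1 < β := by
      rw [hβdef, show (1:ℝ) = Real.exp 0 from (Real.exp_zero).symm]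
      exact Real.exp_lt_exp.mpr (by linarith)
    set ε := t / (2 * (C + 1)) with hεdef
    have hε : 0 < ε := by positivity
    have hβ0 : (0:ℝ) < β := by linarith
    have h1 := h ε hε β hβ
    rw [Real.log_mul (ne_of_gt hβ0) (ne_of_gt hε),
        Real.log_div (by positivity) (ne_of_gt hε)] at h1
    have hlogβ : Real.log β = t / 2 := by rw [hβdef, Real.log_exp]
    have hCε : C * ε ≤ t / 2 := by
      have hC1 : (0:ℝ) < C + 1 := by linarith
      have h2 : C * ε * (2 * (C + 1)) = C * t := by
        rw [hεdef]; field_simp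
      nlinarith [mul_pos ht hC1]
    have hβm : (0:ℝ) ≤ β ^ m := Real.rpow_nonneg (le_of_lt hβ0) m
    have hεm : (0:ℝ) ≤ ε ^ m := Real.rpow_nonneg (le_of_lt hε) m
    have hnum : (1:ℝ) ≤ 1 + k * β ^ m * ε ^ m := by nlinarith [mul_nonneg (mul_nonneg hk0 hβm) hεm]
    have hlog : Real.log (1 / (1 + k)) ≤
        Real.log ((1 + k * β ^ m * ε ^ m) / (1 + k)) := by
      apply Real.log_le_log (by positivity)
      gcongr
    have h2m : (0:ℝ) ≤ 2 / m := by positivity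
    have hmul : (2 / m) * Real.log (1 / (1 + k)) ≤
        (2 / m) * Real.log ((1 + k * β ^ m * ε ^ m) / (1 + k)) :=
      mul_le_mul_of_nonneg_left hlog h2m
    linarith
  have hexp : Real.exp (Real.log (1 / (1 + k)) * (2 / m)) ≤ 4 * δ := by
    calc Real.exp (Real.log (1 / (1 + k)) * (2 / m))
        ≤ Real.exp (Real.log (4 * δ)) := Real.exp_le_exp.mpr key
      _ = 4 * δ := Real.exp_log (by positivity)
  have hrpow : (1 / (1 + k)) ^ (2 / m) =
      Real.exp (Real.log (1 / (1 + k)) * (2 / m)) :=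
    Real.rpow_def_of_pos (by positivity) _
  have hXpos : (0:ℝ) < (1 + k) ^ (2 / m) := Real.rpow_pos_of_pos hk _
  have hdiv : (1 / (1 + k)) ^ (2 / m) = 1 / (1 + k) ^ (2 / m) := by
    rw [Real.div_rpow (by norm_num) (le_of_lt hk), Real.one_rpow]
  have hfin : 1 / (1 + k) ^ (2 / m) ≤ 4 * δ := by
    rw [← hdiv, hrpow]; exact hexp
  rw [ge_iff_le, div_le_iff₀ (by positivity)]
  rw [div_le_iff₀ hXpos] at hfin
  nlinarith
end

section
/- The function f(z) = z + (k/(m+1))·conj(z)^{m+1} is injective on the unit disk for every real k with 0 ≤ k ≤ 1 and every natural number m ≥ 1. -/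
/-! The perturbation `g z = (k/(m+1)) * conj z ^ (m+1)` is a strict contraction on the unit disk:
`z ^ (m+1) - w ^ (m+1)` factors through `z - w` with a cofactor of norm `< m+1`. A map of the
form `id + g` with `g` strictly contracting is injective. -/

open Metric

theorem Set.injOn_add_of_norm_sub_lt {E : Type*} [NormedAddCommGroup E] {s : Set E} {g : E → E}
    (hg : ∀ z ∈ s, ∀ w ∈ s, z ≠ w → ‖g z - g w‖ < ‖z - w‖) :
    Set.InjOn (fun z => z + g z) s := by
  intro z hz w hw hzw
  by_contra hne
  have hsub : z - w = g w - g z := by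
    simp only at hzw
    linear_combination (norm := abel) hzw
  have := hg z hz w hw hne
  rw [hsub, ← norm_neg, neg_sub] at this
  exact lt_irrefl _ this

section NormedCommRing

variable {R : Type*} [NormedCommRing R] [NormOneClass R]

theorem norm_pow_sub_pow_le_of_norm_le {z w : R} {r : ℝ} (hz : ‖z‖ ≤ r) (hw : ‖w‖ ≤ r)
    (n : ℕ) : ‖z ^ n - w ^ n‖ ≤ n * r ^ (n - 1) * ‖z - w‖ := by
  have hr : 0 ≤ r := (norm_nonneg z).trans hz
  have hterm : ∀ i ∈ Finset.range n, ‖z ^ i * w ^ (n - 1 - i)‖ ≤ r ^ (n - 1) := by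
    intro i hi
    have hin : i + (n - 1 - i) = n - 1 := by
      have := Finset.mem_range.mp hi
      omega
    calc ‖z ^ i * w ^ (n - 1 - i)‖ ≤ ‖z‖ ^ i * ‖w‖ ^ (n - 1 - i) :=
          (norm_mul_le _ _).trans (mul_le_mul (norm_pow_le _ _) (norm_pow_le _ _)
            (norm_nonneg _) (by positivity))
      _ ≤ r ^ i * r ^ (n - 1 - i) := by gcongr
      _ = r ^ (n - 1) := by rw [← pow_add, hin]
  have hsum : ‖∑ i ∈ Finset.range n, z ^ i * w ^ (n - 1 - i)‖ ≤ n * r ^ (n - 1) :=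
    calc ‖∑ i ∈ Finset.range n, z ^ i * w ^ (n - 1 - i)‖
        ≤ ∑ i ∈ Finset.range n, ‖z ^ i * w ^ (n - 1 - i)‖ := norm_sum_le _ _
      _ ≤ ∑ _i ∈ Finset.range n, r ^ (n - 1) := Finset.sum_le_sum hterm
      _ = n * r ^ (n - 1) := by simp
  rw [← geom_sum₂_mul]
  exact (norm_mul_le _ _).trans (by gcongr)

theorem norm_pow_sub_pow_lt_of_mem_ball {z w : R} (hz : z ∈ ball (0 : R) 1)
    (hw : w ∈ ball (0 : R) 1) (hzw : z ≠ w) {n : ℕ} (hn : 2 ≤ n) :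
    ‖z ^ n - w ^ n‖ < n * ‖z - w‖ := by
  rw [mem_ball_zero_iff] at hz hw
  set r := max ‖z‖ ‖w‖
  have hr1 : r ^ (n - 1) < 1 :=
    pow_lt_one₀ (le_max_of_le_left (norm_nonneg z)) (max_lt hz hw) (by omega)
  have hzw_pos : 0 < ‖z - w‖ := norm_pos_iff.mpr (sub_ne_zero.mpr hzw)
  have hn_pos : (0 : ℝ) < n := by positivity
  calc ‖z ^ n - w ^ n‖ ≤ n * r ^ (n - 1) * ‖z - w‖ :=
        norm_pow_sub_pow_le_of_norm_le (le_max_left _ _) (le_max_right _ _) n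
    _ < n * 1 * ‖z - w‖ := by gcongr
    _ = n * ‖z - w‖ := by rw [mul_one]

end NormedCommRing

theorem stmt_6 (k : ℝ) (hk0 : 0 ≤ k) (hk1 : k ≤ 1) (m : ℕ) (hm : 1 ≤ m) :
    Set.InjOn (fun z : ℂ => z + ((k / (m + 1) : ℝ) : ℂ) * (starRingEnd ℂ z) ^ (m + 1))
      (ball 0 1) := by
  refine Set.injOn_add_of_norm_sub_lt fun z hz w hw hzw => ?_
  have hm1 : (0 : ℝ) < m + 1 := by positivity
  have hnorm : ‖((k / (m + 1) : ℝ) : ℂ) * starRingEnd ℂ z ^ (m + 1)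
      - ((k / (m + 1) : ℝ) : ℂ) * starRingEnd ℂ w ^ (m + 1)‖
      = k / (m + 1) * ‖z ^ (m + 1) - w ^ (m + 1)‖ := by
    rw [← mul_sub, ← map_pow, ← map_pow, ← map_sub, norm_mul, Complex.norm_conj,
      Complex.norm_real, Real.norm_of_nonneg (by positivity)]
  rw [hnorm]
  calc k / (m + 1) * ‖z ^ (m + 1) - w ^ (m + 1)‖
      ≤ 1 / (m + 1) * ‖z ^ (m + 1) - w ^ (m + 1)‖ := by gcongr
    _ < 1 / (m + 1) * ((m + 1 : ℕ) * ‖z - w‖) := by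
        gcongr
        exact norm_pow_sub_pow_lt_of_mem_ball hz hw hzw (by omega)
    _ = ‖z - w‖ := by push_cast; field_simp
end

section
/- Suppose c_1 > 0, |c_2 + c_1^2 a_2| ≤ R/2, |c_2| ≤ 2c_1(1 − c_1), c_1 ≤ 1, and c_1 ≥ (3√3/(2π))·R =: 1/d for some R ∈ (0,1). Then |a_2| ≤ d(dR/2 + 2) − 2. -/
/-! Subtracting `c₂` from `c₂ + c₁² a₂` and using Pick's bound gives
`c₁² ‖a₂‖ ≤ R/2 + 2c₁(1 - c₁)`, i.e. `‖a₂‖ ≤ (R/2) t² + 2t - 2` with `t = 1/c₁`.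
The right-hand side increases in `t ≥ 0`, and the lower bound on `c₁` says `t ≤ d`. -/

lemma sq_mul_norm_le_add {c₁ A B : ℝ} {c₂ a₂ : ℂ} (h₁ : ‖c₂ + (c₁ : ℂ) ^ 2 * a₂‖ ≤ A)
    (h₂ : ‖c₂‖ ≤ B) : c₁ ^ 2 * ‖a₂‖ ≤ A + B := by
  have hnorm : ‖(c₁ : ℂ) ^ 2 * a₂‖ = c₁ ^ 2 * ‖a₂‖ := by
    rw [norm_mul, norm_pow, Complex.norm_real, Real.norm_eq_abs, sq_abs]
  calc c₁ ^ 2 * ‖a₂‖ = ‖(c₂ + (c₁ : ℂ) ^ 2 * a₂) - c₂‖ := by rw [add_sub_cancel_left, hnorm]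
    _ ≤ ‖c₂ + (c₁ : ℂ) ^ 2 * a₂‖ + ‖c₂‖ := norm_sub_le _ _
    _ ≤ A + B := add_le_add h₁ h₂

lemma le_of_sq_mul_le_pick_bound {c x R d : ℝ} (hc : 0 < c) (hR : 0 ≤ R) (hcd : c⁻¹ ≤ d)
    (h : c ^ 2 * x ≤ R / 2 + 2 * c * (1 - c)) : x ≤ d * (d * R / 2 + 2) - 2 := by
  have hd : 0 ≤ d := (inv_pos.2 hc).le.trans hcd
  calc x = c⁻¹ ^ 2 * (c ^ 2 * x) := by field_simp
    _ ≤ c⁻¹ ^ 2 * (R / 2 + 2 * c * (1 - c)) := by gcongr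
    _ = c⁻¹ * (c⁻¹ * R / 2 + 2) - 2 := by field_simp; ring
    _ ≤ d * (d * R / 2 + 2) - 2 := by gcongr ?_ * (?_ * R / 2 + 2) - 2

theorem stmt_14_general (c1 R : ℝ) (c2 a2 : ℂ) (hR0 : 0 < R)
    (hc1 : 0 < c1)
    (h1 : ‖c2 + (c1 : ℂ) ^ 2 * a2‖ ≤ R / 2)
    (h2 : ‖c2‖ ≤ 2 * c1 * (1 - c1))
    (h3 : c1 ≥ (3 * Real.sqrt 3 / (2 * Real.pi)) * R) :
    ‖a2‖ ≤ (2 * Real.pi / (3 * Real.sqrt 3 * R)) *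
      ((2 * Real.pi / (3 * Real.sqrt 3 * R)) * R / 2 + 2) - 2 := by
  have hinv : c1⁻¹ ≤ 2 * Real.pi / (3 * Real.sqrt 3 * R) := by
    calc c1⁻¹ ≤ ((3 * Real.sqrt 3 / (2 * Real.pi)) * R)⁻¹ := inv_anti₀ (by positivity) h3
      _ = 2 * Real.pi / (3 * Real.sqrt 3 * R) := by field_simp
  exact le_of_sq_mul_le_pick_bound hc1 hR0.le hinv (sq_mul_norm_le_add h1 h2)

theorem stmt_14 (c1 R : ℝ) (c2 a2 : ℂ) (hR0 : 0 < R) (hR1 : R < 1)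
    (hc1 : 0 < c1) (hc1' : c1 ≤ 1)
    (h1 : ‖c2 + (c1 : ℂ) ^ 2 * a2‖ ≤ R / 2)
    (h2 : ‖c2‖ ≤ 2 * c1 * (1 - c1))
    (h3 : c1 ≥ (3 * Real.sqrt 3 / (2 * Real.pi)) * R) :
    ‖a2‖ ≤ (2 * Real.pi / (3 * Real.sqrt 3 * R)) *
      ((2 * Real.pi / (3 * Real.sqrt 3 * R)) * R / 2 + 2) - 2 :=
  stmt_14_general c1 R c2 a2 hR0 hc1 h1 h2 h3
end
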